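/- Let H ∈ (0,1), let d ≥ 2 be an integer and T > 0. If H*d < 2, then ∫₁^∞ z^{d/2 − 1} A(z)² dz < +∞, where A(z) = ∫₀^T ∫₀^t e^{−φ(t,v) z} dv dt. -/
import Mathlib


open MeasureTheory Real

noncomputable section

/-- `φ(t,v) = t^{2H} v^{2H} − ¼(t^{2H} + v^{2H} − |t−v|^{2H})²`. -/
def phiFun (H t v : ℝ) : ℝ :=
  t ^ (2 * H) * v ^ (2 * H) - (t ^ (2 * H) + v ^ (2 * H) - |t - v| ^ (2 * H)) ^ 2 / 4

/-- `A(z) = ∫₀^T ∫₀^t e^{−φ(t,v) z} dv dt`. -/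
def AFun (H T z : ℝ) : ℝ :=
  ∫ t in Set.Ioc (0 : ℝ) T, ∫ v in Set.Ioc (0 : ℝ) t, Real.exp (-(phiFun H t v * z))

lemma aux_bernoulli {H x y : ℝ} (hH0 : 0 < H) (hH1 : H < 1) (hy : 0 < y) (hxy : y ≤ x) :
    (x + y) ^ H ≤ x ^ H + H * y ^ H := by
  have hx : 0 < x := hy.trans_le hxy
  have hdiv : (0:ℝ) ≤ y / x := by positivity
  have h2 : (x + y) ^ H = x ^ H * (1 + y / x) ^ H := by
    rw [← Real.mul_rpow hx.le (by positivity)]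
    congr 1
    field_simp
  have h3 : (1 + y / x) ^ H ≤ 1 + H * (y / x) :=
    rpow_one_add_le_one_add_mul_self (by linarith) hH0.le hH1.le
  have h5 : x ^ (H - 1) ≤ y ^ (H - 1) :=
    Real.rpow_le_rpow_of_nonpos hy hxy (by linarith)
  have h4 : x ^ H * (y / x) = y * x ^ (H - 1) := by
    rw [Real.rpow_sub hx, Real.rpow_one]
    field_simp
  have h6 : y * y ^ (H - 1) = y ^ H := by
    nth_rewrite 1 [← Real.rpow_one y]
    rw [← Real.rpow_add hy]
    norm_num
  have hxH : (0:ℝ) ≤ x ^ H := Real.rpow_nonneg hx.le H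
  calc (x + y) ^ H = x ^ H * (1 + y / x) ^ H := h2
    _ ≤ x ^ H * (1 + H * (y / x)) := mul_le_mul_of_nonneg_left h3 hxH
    _ = x ^ H + H * (x ^ H * (y / x)) := by ring
    _ ≤ x ^ H + H * y ^ H := by
        have : y * x ^ (H - 1) ≤ y ^ H := by
          rw [← h6]; exact mul_le_mul_of_nonneg_left h5 hy.le
        rw [h4]
        nlinarith [hH0.le]

lemma rpow_two_mul {x H : ℝ} (hx : 0 ≤ x) : x ^ (2 * H) = (x ^ H) ^ 2 := by
  rw [mul_comm, Real.rpow_mul hx, show ((2:ℝ) = ((2:ℕ):ℝ)) by norm_num, Real.rpow_natCast]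

lemma phi_lower {H : ℝ} (hH0 : 0 < H) (hH1 : H < 1) {v t : ℝ} (hv : 0 < v) (hvt : v < t) :
    (1 - H) / 2 * (v ^ (2 * H) * (t - v) ^ (2 * H)) ≤ phiFun H t v := by
  have hs : 0 < t - v := sub_pos.mpr hvt
  have ht : 0 < t := hv.trans hvt
  have habs : |t - v| = t - v := abs_of_pos hs
  set A := t ^ H with hA_def
  set B := v ^ H with hB_def
  set Cq := (t - v) ^ H with hC_def
  have hA : 0 < A := Real.rpow_pos_of_pos ht H
  have hB : 0 < B := Real.rpow_pos_of_pos hv H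
  have hCq : 0 < Cq := Real.rpow_pos_of_pos hs H
  have hBA : B ≤ A := Real.rpow_le_rpow hv.le hvt.le hH0.le
  have hCA : Cq ≤ A := Real.rpow_le_rpow hs.le (by linarith) hH0.le
  have e1 : t ^ (2 * H) = A ^ 2 := rpow_two_mul ht.le
  have e2 : v ^ (2 * H) = B ^ 2 := rpow_two_mul hv.le
  have e3 : (t - v) ^ (2 * H) = Cq ^ 2 := rpow_two_mul hs.le
  clear_value A B Cq
  rw [phiFun, habs, e1, e2, e3]
  have hiden : A ^ 2 * B ^ 2 - (A ^ 2 + B ^ 2 - Cq ^ 2) ^ 2 / 4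
      = (Cq ^ 2 - (A - B) ^ 2) * ((A + B) ^ 2 - Cq ^ 2) / 4 := by ring
  rw [hiden]
  rcases le_total (t - v) v with hsv | hvs
  · -- case s ≤ v
    have hCB : Cq ≤ B := by
      rw [hC_def, hB_def]; exact Real.rpow_le_rpow hs.le hsv hH0.le
    have hAB2 : A ≤ B + H * Cq := by
      have h := aux_bernoulli hH0 hH1 hs hsv
      rw [add_sub_cancel] at h
      rw [hA_def, hB_def, hC_def]; exact h
    have hfirst : (1 - H ^ 2) * Cq ^ 2 ≤ Cq ^ 2 - (A - B) ^ 2 := by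
      nlinarith [mul_self_le_mul_self (sub_nonneg.mpr hBA) (by linarith : A - B ≤ H * Cq),
        mul_pos hH0 hCq]
    have hsecond : 3 * B ^ 2 ≤ (A + B) ^ 2 - Cq ^ 2 := by nlinarith
    have hfpos : (0:ℝ) ≤ Cq ^ 2 - (A - B) ^ 2 := by
      have h0 : (0:ℝ) ≤ (1 - H ^ 2) * Cq ^ 2 :=
        mul_nonneg (by nlinarith) (sq_nonneg _)
      linarith
    have hprod : ((1 - H ^ 2) * Cq ^ 2) * (3 * B ^ 2)
        ≤ (Cq ^ 2 - (A - B) ^ 2) * ((A + B) ^ 2 - Cq ^ 2) :=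
      mul_le_mul hfirst hsecond (by positivity) hfpos
    have hcoef : (1 - H) / 2 * (B ^ 2 * Cq ^ 2) ≤ ((1 - H ^ 2) * Cq ^ 2) * (3 * B ^ 2) / 4 := by
      have h0 : (0:ℝ) ≤ (1 - H) * (1 + 3 * H) * (B ^ 2 * Cq ^ 2) :=
        mul_nonneg (mul_nonneg (by linarith) (by linarith))
          (mul_nonneg (sq_nonneg _) (sq_nonneg _))
      have h1 : ((1 - H ^ 2) * Cq ^ 2) * (3 * B ^ 2) / 4 - (1 - H) / 2 * (B ^ 2 * Cq ^ 2)
          = (1 - H) * (1 + 3 * H) * (B ^ 2 * Cq ^ 2) / 4 := by ring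
      linarith
    linarith
  · -- case v ≤ s
    have hBC : B ≤ Cq := by
      rw [hC_def, hB_def]; exact Real.rpow_le_rpow hv.le hvs hH0.le
    have hA2 : A ≤ Cq + H * B := by
      have h := aux_bernoulli hH0 hH1 hv hvs
      rw [sub_add_cancel] at h
      rw [hA_def, hB_def, hC_def]; exact h
    have hHB : (0:ℝ) ≤ H * B := mul_nonneg hH0.le hB.le
    have hwpos : (0:ℝ) ≤ Cq - (1 - H) * B := by linarith
    have hfirst : (1 - H) * B * Cq ≤ Cq ^ 2 - (A - B) ^ 2 := by
      have hw : A - B ≤ Cq - (1 - H) * B := by linarith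
      have hsq : (A - B) * (A - B) ≤ (Cq - (1 - H) * B) * (Cq - (1 - H) * B) :=
        mul_self_le_mul_self (sub_nonneg.mpr hBA) hw
      have h2 : Cq ^ 2 - (Cq - (1 - H) * B) ^ 2 - (1 - H) * B * Cq
          = (1 - H) * B * (Cq - (1 - H) * B) := by ring
      have h3 : (0:ℝ) ≤ (1 - H) * B * (Cq - (1 - H) * B) :=
        mul_nonneg (mul_nonneg (by linarith) hB.le) hwpos
      have hsq' : (A - B) ^ 2 ≤ (Cq - (1 - H) * B) ^ 2 := by rw [sq, sq]; exact hsq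
      linarith
    have hsecond : 2 * Cq * B ≤ (A + B) ^ 2 - Cq ^ 2 := by
      have hsq : (Cq + B) * (Cq + B) ≤ (A + B) * (A + B) :=
        mul_self_le_mul_self (by positivity) (by linarith)
      have hsq' : (Cq + B) ^ 2 ≤ (A + B) ^ 2 := by rw [sq, sq]; exact hsq
      have hid : (Cq + B) ^ 2 - Cq ^ 2 = 2 * Cq * B + B ^ 2 := by ring
      linarith [hsq', sq_nonneg B, hid]
    have hfpos : (0:ℝ) ≤ Cq ^ 2 - (A - B) ^ 2 := by
      have h0 : (0:ℝ) ≤ (1 - H) * B * Cq :=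
        mul_nonneg (mul_nonneg (by linarith) hB.le) hCq.le
      linarith
    have hprod : ((1 - H) * B * Cq) * (2 * Cq * B)
        ≤ (Cq ^ 2 - (A - B) ^ 2) * ((A + B) ^ 2 - Cq ^ 2) :=
      mul_le_mul hfirst hsecond (by positivity) hfpos
    linarith [hprod]

lemma exp_neg_le_rpow {β : ℝ} (hβ : 0 < β) {n : ℕ} (hn : 0 < n) (hβn : β ≤ n) {x : ℝ}
    (hx : 0 < x) : Real.exp (-x) ≤ (n : ℝ) ^ n * x ^ (-β) := by
  have hn1 : (1:ℝ) ≤ (n : ℝ) := by exact_mod_cast hn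
  have hnn1 : (1:ℝ) ≤ (n : ℝ) ^ n := one_le_pow₀ hn1
  rcases le_total x 1 with h1 | h1
  · have hx1 : (1:ℝ) ≤ x ^ (-β) :=
      Real.one_le_rpow_of_pos_of_le_one_of_nonpos hx h1 (by linarith)
    calc Real.exp (-x) ≤ 1 := Real.exp_le_one_iff.mpr (by linarith)
      _ ≤ (n : ℝ) ^ n * x ^ (-β) := by nlinarith
  · have hxn : (0:ℝ) < x ^ n := by positivity
    have key : (x / n) ^ n ≤ Real.exp x := by
      have h2 : x / n ≤ Real.exp (x / n) := by linarith [Real.add_one_le_exp (x / n)]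
      calc (x / n) ^ n ≤ (Real.exp (x / n)) ^ n := pow_le_pow_left₀ (by positivity) h2 n
        _ = Real.exp x := by
            rw [← Real.exp_nat_mul]
            congr 1
            field_simp
    have key2 : x ^ n / (n : ℝ) ^ n ≤ Real.exp x := by rwa [div_pow] at key
    have key3 : x ^ n ≤ Real.exp x * (n : ℝ) ^ n := by
      rw [div_le_iff₀ (by positivity : (0:ℝ) < ((n:ℝ)) ^ n)] at key2
      linarith
    have h3 : Real.exp (-x) ≤ (n : ℝ) ^ n / x ^ n := by
      rw [le_div_iff₀ hxn]
      calc Real.exp (-x) * x ^ n ≤ Real.exp (-x) * (Real.exp x * (n : ℝ) ^ n) :=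
            mul_le_mul_of_nonneg_left key3 (Real.exp_nonneg _)
        _ = (n : ℝ) ^ n := by
            rw [← mul_assoc, ← Real.exp_add, neg_add_cancel, Real.exp_zero, one_mul]
    have h4 : (n : ℝ) ^ n / x ^ n = (n : ℝ) ^ n * x ^ (-(n : ℝ)) := by
      rw [Real.rpow_neg hx.le, Real.rpow_natCast, div_eq_mul_inv]
    have h5 : x ^ (-(n:ℝ)) ≤ x ^ (-β) :=
      Real.rpow_le_rpow_of_exponent_le h1 (by linarith)
    calc Real.exp (-x) ≤ (n : ℝ) ^ n / x ^ n := h3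
      _ = (n : ℝ) ^ n * x ^ (-(n:ℝ)) := h4
      _ ≤ (n : ℝ) ^ n * x ^ (-β) := by
          apply mul_le_mul_of_nonneg_left h5 (by positivity)

lemma rpow_neg_integrableOn_Ioo {a t : ℝ} (ha : a < 1) (ht : 0 < t) :
    IntegrableOn (fun v : ℝ => v ^ (-a)) (Set.Ioo 0 t) := by
  have h := intervalIntegral.intervalIntegrable_rpow' (a := 0) (b := t) (show (-1:ℝ) < -a by linarith)
  rw [intervalIntegrable_iff_integrableOn_Ioc_of_le ht.le] at h
  exact h.mono_set Set.Ioo_subset_Ioc_self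

lemma rpow_neg_sub_integrableOn_Ioo {a t : ℝ} (ha : a < 1) (ht : 0 < t) :
    IntegrableOn (fun v : ℝ => (t - v) ^ (-a)) (Set.Ioo 0 t) := by
  have h := (intervalIntegral.intervalIntegrable_rpow' (a := 0) (b := t)
    (show (-1:ℝ) < -a by linarith)).comp_sub_left t
  simp only [sub_zero, sub_self] at h
  replace h := h.symm
  rw [intervalIntegrable_iff_integrableOn_Ioc_of_le ht.le] at h
  exact h.mono_set Set.Ioo_subset_Ioc_self

lemma integral_rpow_neg_Ioo {a t : ℝ} (ha0 : 0 < a) (ha : a < 1) (ht : 0 < t) :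
    ∫ v in Set.Ioo (0:ℝ) t, v ^ (-a) = t ^ (1 - a) / (1 - a) := by
  rw [← MeasureTheory.integral_Ioc_eq_integral_Ioo,
    ← intervalIntegral.integral_of_le ht.le, integral_rpow (Or.inl (by linarith))]
  rw [Real.zero_rpow (by linarith : -a + 1 ≠ 0)]
  norm_num
  ring_nf

lemma integral_rpow_neg_sub_Ioo {a t : ℝ} (ha0 : 0 < a) (ha : a < 1) (ht : 0 < t) :
    ∫ v in Set.Ioo (0:ℝ) t, (t - v) ^ (-a) = t ^ (1 - a) / (1 - a) := by
  rw [← MeasureTheory.integral_Ioc_eq_integral_Ioo,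
    ← intervalIntegral.integral_of_le ht.le]
  rw [intervalIntegral.integral_comp_sub_left (fun x => x ^ (-a)) t]
  simp only [sub_zero, sub_self]
  rw [integral_rpow (Or.inl (by linarith))]
  rw [Real.zero_rpow (by linarith : -a + 1 ≠ 0)]
  norm_num
  ring_nf

lemma integral_rpow_Ioc {r T : ℝ} (hr : -1 < r) (hT : 0 < T) :
    ∫ t in Set.Ioc (0:ℝ) T, t ^ r = T ^ (r + 1) / (r + 1) := by
  rw [← intervalIntegral.integral_of_le hT.le, integral_rpow (Or.inl hr),
    Real.zero_rpow (by linarith : r + 1 ≠ 0), sub_zero]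

lemma AFun_le {H : ℝ} (hH0 : 0 < H) (hH1 : H < 1) {T : ℝ} (hT : 0 < T) {β : ℝ} (hβ : 0 < β)
    (hab : 2 * H * β < 1) :
    ∃ C : ℝ, 0 ≤ C ∧ ∀ z : ℝ, 1 ≤ z → AFun H T z ≤ C * z ^ (-β) := by
  set a := 2 * H * β with ha_def
  have ha0 : 0 < a := by positivity
  have ha1 : a < 1 := hab
  set n := ⌈β⌉₊ with hn_def
  have hn : 0 < n := Nat.ceil_pos.mpr hβ
  have hβn : β ≤ (n : ℝ) := Nat.le_ceil β
  set K : ℝ := (1 - H) / 2 with hK_def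
  have hK : 0 < K := by rw [hK_def]; linarith
  set c₁ : ℝ := (n : ℝ) ^ n * K ^ (-β) with hc1_def
  have hc₁ : 0 < c₁ := by
    apply mul_pos (by positivity) (Real.rpow_pos_of_pos hK _)
  set c₂ : ℝ := c₁ * (2 : ℝ) ^ a * (2 / (1 - a)) with hc2_def
  have hc₂ : 0 < c₂ :=
    mul_pos (mul_pos hc₁ (Real.rpow_pos_of_pos two_pos a)) (div_pos two_pos (by linarith))
  refine ⟨c₂ * (T ^ (2 - 2 * a) / (2 - 2 * a)),
    le_of_lt (mul_pos hc₂ (div_pos (Real.rpow_pos_of_pos hT _) (by linarith))),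
    fun z hz => ?_⟩
  have hz0 : (0:ℝ) < z := lt_of_lt_of_le one_pos hz
  have inner_le : ∀ t ∈ Set.Ioc (0:ℝ) T,
      (∫ v in Set.Ioc (0:ℝ) t, Real.exp (-(phiFun H t v * z)))
        ≤ c₂ * z ^ (-β) * t ^ (1 - 2 * a) := by
    intro t ht
    obtain ⟨ht0, htT⟩ := ht
    rw [MeasureTheory.integral_Ioc_eq_integral_Ioo]
    have hint1 := rpow_neg_integrableOn_Ioo ha1 ht0
    have hint2 := rpow_neg_sub_integrableOn_Ioo ha1 ht0
    have hg_int : IntegrableOn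
        (fun v => c₁ * z ^ (-β) * ((2:ℝ) ^ a * t ^ (-a)) * (v ^ (-a) + (t - v) ^ (-a)))
        (Set.Ioo 0 t) := (hint1.add hint2).const_mul _
    have h2t : ((t / 2 : ℝ)) ^ (-a) = 2 ^ a * t ^ (-a) := by
      rw [div_eq_mul_inv, Real.mul_rpow ht0.le (by norm_num),
        Real.inv_rpow (by norm_num : (0:ℝ) ≤ 2), Real.rpow_neg (by norm_num : (0:ℝ) ≤ 2),
        inv_inv, mul_comm]
    have hmono := MeasureTheory.integral_mono_of_nonneg
      (f := fun v => Real.exp (-(phiFun H t v * z)))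
      (g := fun v => c₁ * z ^ (-β) * ((2:ℝ) ^ a * t ^ (-a)) * (v ^ (-a) + (t - v) ^ (-a)))
      (μ := volume.restrict (Set.Ioo 0 t))
      (Filter.Eventually.of_forall fun v => Real.exp_nonneg _) hg_int ?_
    · -- compute the bound integral
      refine le_trans hmono ?_
      rw [MeasureTheory.integral_const_mul, MeasureTheory.integral_add hint1 hint2,
        integral_rpow_neg_Ioo ha0 ha1 ht0, integral_rpow_neg_sub_Ioo ha0 ha1 ht0]
      have htt : t ^ (-a) * t ^ (1 - a) = t ^ (1 - 2 * a) := by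
        rw [← Real.rpow_add ht0]; ring_nf
      apply le_of_eq
      rw [hc2_def, ← htt]
      ring
    · refine (ae_restrict_mem measurableSet_Ioo).mono fun v hv => ?_
      obtain ⟨hv0, hvt⟩ := hv
      have hs : 0 < t - v := sub_pos.mpr hvt
      have hvpow : (0:ℝ) < v ^ (2 * H) := Real.rpow_pos_of_pos hv0 _
      have hspow : (0:ℝ) < (t - v) ^ (2 * H) := Real.rpow_pos_of_pos hs _
      have hphi : K * (v ^ (2 * H) * (t - v) ^ (2 * H)) ≤ phiFun H t v := by
        rw [hK_def]; exact phi_lower hH0 hH1 hv0 hvt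
      have hX : (0:ℝ) < K * (v ^ (2 * H) * (t - v) ^ (2 * H)) * z := by positivity
      have step1 : Real.exp (-(phiFun H t v * z))
          ≤ Real.exp (-(K * (v ^ (2 * H) * (t - v) ^ (2 * H)) * z)) := by
        apply Real.exp_le_exp.mpr
        apply neg_le_neg
        exact mul_le_mul_of_nonneg_right hphi hz0.le
      have step2 := exp_neg_le_rpow hβ hn hβn hX
      have hXeq : (K * (v ^ (2 * H) * (t - v) ^ (2 * H)) * z) ^ (-β)
          = K ^ (-β) * (v ^ (-a) * (t - v) ^ (-a)) * z ^ (-β) := by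
        rw [Real.mul_rpow (by positivity) hz0.le, Real.mul_rpow hK.le (by positivity),
          Real.mul_rpow hvpow.le hspow.le, ← Real.rpow_mul hv0.le, ← Real.rpow_mul hs.le,
          show 2 * H * -β = -a by rw [ha_def]; ring]
      have step4 : v ^ (-a) * (t - v) ^ (-a)
          ≤ 2 ^ a * t ^ (-a) * (v ^ (-a) + (t - v) ^ (-a)) := by
        have hva : (0:ℝ) ≤ v ^ (-a) := Real.rpow_nonneg hv0.le _
        have hsa : (0:ℝ) ≤ (t - v) ^ (-a) := Real.rpow_nonneg hs.le _
        have h2ta : (0:ℝ) ≤ 2 ^ a * t ^ (-a) := by positivity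
        rcases le_total v (t / 2) with hvle | hvle
        · have hle : (t - v) ^ (-a) ≤ (t / 2) ^ (-a) :=
            Real.rpow_le_rpow_of_nonpos (by linarith) (by linarith) (by linarith)
          rw [h2t] at hle
          calc v ^ (-a) * (t - v) ^ (-a) ≤ v ^ (-a) * (2 ^ a * t ^ (-a)) :=
                mul_le_mul_of_nonneg_left hle hva
            _ ≤ 2 ^ a * t ^ (-a) * (v ^ (-a) + (t - v) ^ (-a)) := by
                rw [mul_comm]
                exact mul_le_mul_of_nonneg_left (le_add_of_nonneg_right hsa) h2ta
        · have hle : v ^ (-a) ≤ (t / 2) ^ (-a) :=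
            Real.rpow_le_rpow_of_nonpos (by linarith) hvle (by linarith)
          rw [h2t] at hle
          calc v ^ (-a) * (t - v) ^ (-a) ≤ 2 ^ a * t ^ (-a) * (t - v) ^ (-a) :=
                mul_le_mul_of_nonneg_right hle hsa
            _ ≤ 2 ^ a * t ^ (-a) * (v ^ (-a) + (t - v) ^ (-a)) :=
                mul_le_mul_of_nonneg_left (le_add_of_nonneg_left hva) h2ta
      calc Real.exp (-(phiFun H t v * z))
          ≤ (n : ℝ) ^ n * (K * (v ^ (2 * H) * (t - v) ^ (2 * H)) * z) ^ (-β) :=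
            le_trans step1 step2
        _ = c₁ * z ^ (-β) * (v ^ (-a) * (t - v) ^ (-a)) := by
            rw [hXeq, hc1_def]; ring
        _ ≤ c₁ * z ^ (-β) * (2 ^ a * t ^ (-a) * (v ^ (-a) + (t - v) ^ (-a))) :=
            mul_le_mul_of_nonneg_left step4 (by positivity)
        _ = c₁ * z ^ (-β) * (2 ^ a * t ^ (-a)) * (v ^ (-a) + (t - v) ^ (-a)) := by ring
  -- outer bound
  have houter : AFun H T z ≤ ∫ t in Set.Ioc (0:ℝ) T, c₂ * z ^ (-β) * t ^ (1 - 2 * a) := by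
    unfold AFun
    apply MeasureTheory.integral_mono_of_nonneg
    · exact Filter.Eventually.of_forall fun t =>
        MeasureTheory.integral_nonneg fun v => Real.exp_nonneg _
    · have h := intervalIntegral.intervalIntegrable_rpow' (a := 0) (b := T)
        (show (-1:ℝ) < 1 - 2 * a by linarith)
      rw [intervalIntegrable_iff_integrableOn_Ioc_of_le hT.le] at h
      exact h.const_mul _
    · exact (ae_restrict_mem measurableSet_Ioc).mono inner_le
  refine le_trans houter ?_
  rw [MeasureTheory.integral_const_mul, integral_rpow_Ioc (by linarith) hT,
    show (1 - 2 * a + 1) = 2 - 2 * a by ring]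
  ring_nf
  exact le_refl _

/-- For `H ∈ (0,1)`, an integer `d ≥ 2` and `T > 0`, if `H * d < 2` then
`∫₁^∞ z^{d/2−1} A(z)² dz < +∞`. -/
theorem integral_A_sq_lt_top (H : ℝ) (hH : H ∈ Set.Ioo (0 : ℝ) 1) (d : ℕ)
    (hd : 2 ≤ d) (T : ℝ) (hT : 0 < T) (hHd : H * d < 2) :
    (∫⁻ z in Set.Ioi (1 : ℝ),
        ENNReal.ofReal (z ^ ((d : ℝ) / 2 - 1)) * ENNReal.ofReal (AFun H T z) ^ 2) < ⊤ := by
  obtain ⟨hH0, hH1⟩ := hH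
  set β : ℝ := (d : ℝ) / 8 + 1 / (4 * H) with hβ_def
  have hβ : 0 < β := by positivity
  have hab : 2 * H * β < 1 := by
    have he : 2 * H * β = H * (d : ℝ) / 4 + 1 / 2 := by
      rw [hβ_def]; field_simp; ring
    rw [he]; linarith
  have h2β : 2 * β = (d : ℝ) / 4 + 1 / (2 * H) := by
    rw [hβ_def]; field_simp; ring
  have hp : (d : ℝ) / 2 - 1 - 2 * β < -1 := by
    have h4 : (d : ℝ) / 4 < 1 / (2 * H) := by
      rw [div_lt_div_iff₀ (by norm_num) (by positivity)]
      nlinarith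
    linarith
  obtain ⟨C, hC0, hC⟩ := AFun_le hH0 hH1 hT hβ hab
  have key : (∫⁻ z in Set.Ioi (1 : ℝ),
        ENNReal.ofReal (z ^ ((d : ℝ) / 2 - 1)) * ENNReal.ofReal (AFun H T z) ^ 2)
      ≤ ∫⁻ z in Set.Ioi (1 : ℝ),
        ENNReal.ofReal (C ^ 2 * z ^ ((d : ℝ) / 2 - 1 - 2 * β)) := by
    apply setLIntegral_mono' measurableSet_Ioi
    intro z hz
    have hz1 : (1:ℝ) ≤ z := le_of_lt hz
    have hz0 : (0:ℝ) < z := lt_trans one_pos hz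
    have hA := hC z hz1
    have hCz : (0:ℝ) ≤ C * z ^ (-β) := mul_nonneg hC0 (Real.rpow_nonneg hz0.le _)
    have h1 : ENNReal.ofReal (AFun H T z) ≤ ENNReal.ofReal (C * z ^ (-β)) :=
      ENNReal.ofReal_le_ofReal hA
    have ezz : z ^ (-β) * z ^ (-β) = z ^ (-(2 * β)) := by
      rw [← Real.rpow_add hz0, show -β + -β = -(2 * β) by ring]
    have ereal : z ^ ((d : ℝ) / 2 - 1) * (C * z ^ (-β)) ^ 2
        = C ^ 2 * z ^ ((d : ℝ) / 2 - 1 - 2 * β) := by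
      have e2 : z ^ ((d : ℝ) / 2 - 1) * z ^ (-(2 * β)) = z ^ ((d : ℝ) / 2 - 1 - 2 * β) := by
        rw [← Real.rpow_add hz0, show (d : ℝ) / 2 - 1 + -(2 * β) = (d : ℝ) / 2 - 1 - 2 * β by ring]
      calc z ^ ((d : ℝ) / 2 - 1) * (C * z ^ (-β)) ^ 2
          = C ^ 2 * (z ^ ((d : ℝ) / 2 - 1) * (z ^ (-β) * z ^ (-β))) := by ring
        _ = C ^ 2 * (z ^ ((d : ℝ) / 2 - 1) * z ^ (-(2 * β))) := by rw [ezz]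
        _ = C ^ 2 * z ^ ((d : ℝ) / 2 - 1 - 2 * β) := by rw [e2]
    calc ENNReal.ofReal (z ^ ((d : ℝ) / 2 - 1)) * ENNReal.ofReal (AFun H T z) ^ 2
        ≤ ENNReal.ofReal (z ^ ((d : ℝ) / 2 - 1)) * ENNReal.ofReal (C * z ^ (-β)) ^ 2 :=
          mul_le_mul_right (pow_le_pow_left' h1 2) _
      _ = ENNReal.ofReal (z ^ ((d : ℝ) / 2 - 1) * (C * z ^ (-β)) ^ 2) := by
          rw [← ENNReal.ofReal_pow hCz, ← ENNReal.ofReal_mul (Real.rpow_nonneg hz0.le _)]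
      _ = ENNReal.ofReal (C ^ 2 * z ^ ((d : ℝ) / 2 - 1 - 2 * β)) := by rw [ereal]
  refine lt_of_le_of_lt key ?_
  have hint : IntegrableOn (fun z : ℝ => C ^ 2 * z ^ ((d : ℝ) / 2 - 1 - 2 * β))
      (Set.Ioi (1:ℝ)) := (integrableOn_Ioi_rpow_of_lt hp one_pos).const_mul _
  have hae : 0 ≤ᵐ[volume.restrict (Set.Ioi (1:ℝ))]
      fun z : ℝ => C ^ 2 * z ^ ((d : ℝ) / 2 - 1 - 2 * β) := by
    refine (ae_restrict_mem measurableSet_Ioi).mono fun z hz => ?_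
    have : (0:ℝ) < z := lt_trans one_pos hz
    positivity
  exact (hasFiniteIntegral_iff_ofReal hae).mp hint.hasFiniteIntegral
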